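/- arXiv:1905.03407 — 4 statements merged into one kernel-verified Lean document; each statement's English description precedes it below -/
import Mathlib

section
/- The matrix A₁ = [[1,-2,-2],[-2,-3,-6],[0,-2,-3]] has a real eigenvalue λ with 1.9 < λ < 2, and a corresponding eigenvector v with all three coordinate signs (+, -, +), i.e., v₁ > 0, v₂ < 0, v₃ > 0. -/
open Matrix

/-- The matrix `A₁ = [[1,-2,-2],[-2,-3,-6],[0,-2,-3]]` has a real eigenvalue
`λ` with `1.9 < λ < 2`, with an eigenvector `v` having signs `(+, -, +)`. -/
theorem A1_eigenvector_signs :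
    ∃ lam : ℝ, 1.9 < lam ∧ lam < 2 ∧
      ∃ v : Fin 3 → ℝ, v ≠ 0 ∧
        (!![(1:ℝ), -2, -2; -2, -3, -6; 0, -2, -3]).mulVec v = lam • v ∧
        v 0 > 0 ∧ v 1 < 0 ∧ v 2 > 0 := by
  have hcont : ContinuousOn (fun x : ℝ => x^3 + 5*x^2 - 13*x - 1) (Set.Icc 1.9 2) := by
    fun_prop
  have h0 : (0:ℝ) ∈ Set.Ioo ((1.9:ℝ)^3 + 5*(1.9:ℝ)^2 - 13*(1.9:ℝ) - 1)
      ((2:ℝ)^3 + 5*(2:ℝ)^2 - 13*(2:ℝ) - 1) := by norm_num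
  have := intermediate_value_Ioo (by norm_num : (1.9:ℝ) ≤ 2) hcont h0
  obtain ⟨lam, hmem, hf⟩ := this
  obtain ⟨h19, h2⟩ := hmem
  have hf' : lam^3 + 5*lam^2 - 13*lam - 1 = 0 := hf
  refine ⟨lam, h19, h2, ![2 + 2*lam, -(lam^2 + 2*lam - 3), 2*(lam - 1)], ?_, ?_, ?_, ?_, ?_⟩
  · intro h
    have := congrFun h 0
    simp at this
    nlinarith
  · funext i
    fin_cases i
    · simp [Matrix.mulVec, dotProduct, Fin.sum_univ_three]; ring
    · simp [Matrix.mulVec, dotProduct, Fin.sum_univ_three]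
      linear_combination hf'
    · simp [Matrix.mulVec, dotProduct, Fin.sum_univ_three]; ring
  · show (0:ℝ) < 2 + 2*lam; nlinarith
  · show -(lam^2 + 2*lam - 3) < 0; nlinarith
  · show (0:ℝ) < 2*(lam - 1); nlinarith
end

section
/- Suppose v is an eigenvector of A with eigenvalue λ > 1, ⟨φ, v⟩ ≠ 0, and y* = (λ-1)v/⟨φ, v⟩ is the corresponding fixed point of M y = A y/(1 + ⟨φ, y⟩). If there is another eigenvalue μ of A with |μ| > λ, then y* is an unstable fixed point of M (i.e., not Lyapunov stable). -/
open Matrix Filter Topology Module.End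

/-!
Every value of `M` is a multiple of `A` applied to its argument, so `M^[k] y` is a multiple of
`A^k y`. Start at `y = s • v + t • w` with `w` an eigenvector for `μ`: then
`M^[k] y = p • v + q • w` with `q * s * λ^k = p * t * μ^k`. Near `y* = s • v` the coefficients `p`
and `q` are close to `s` and `0` respectively, so `q / p` stays bounded, while `(μ / λ)^k` does not.
-/

theorem exists_iterate_eq_smul_pow_apply {R E : Type*} [Semiring R] [AddCommMonoid E]
    [Module R E] {f : Module.End R E} {M : E → E} (hM : ∀ y, ∃ a : R, M y = a • f y)
    (k : ℕ) (y : E) : ∃ a : R, M^[k] y = a • (f ^ k) y := by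
  induction k with
  | zero => exact ⟨1, by simp⟩
  | succ k ih =>
    obtain ⟨a, ha⟩ := ih
    obtain ⟨b, hb⟩ := hM (M^[k] y)
    refine ⟨b * a, ?_⟩
    rw [Function.iterate_succ_apply', hb, ha, map_smul, smul_smul, pow_succ', Module.End.mul_apply]

section

variable {E : Type*} [NormedAddCommGroup E] [NormedSpace ℝ E]

def IsLyapunovStable (M : E → E) (y : E) : Prop :=
  ∀ ε > 0, ∃ δ > 0, ∀ x : E, ‖x - y‖ < δ → ∀ k : ℕ, ‖M^[k] x - y‖ < ε

/-- `p` is read off continuously from `x = p • v + q • w` as `f x - μ • x = (p * (λ - μ)) • v`. -/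
theorem exists_abs_lt_of_norm_smul_add_smul_lt {f : Module.End ℝ E} (hf : Continuous f)
    {v w : E} {lam μ : ℝ} (hv : f.HasEigenvector lam v) (hw : f.HasEigenvector μ w)
    (hne : lam ≠ μ) {α : ℝ} (hα : 0 < α) :
    ∃ ε > 0, ∀ p q : ℝ, ‖p • v + q • w‖ < ε → |p| < α := by
  have hc : 0 < |lam - μ| * ‖v‖ :=
    mul_pos (abs_pos.2 (sub_ne_zero.2 hne)) (norm_pos_iff.2 hv.2)
  have hg : Tendsto (fun x => f x - μ • x) (𝓝 0) (𝓝 0) :=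
    (hf.sub (continuous_const_smul μ)).tendsto' 0 0 (by simp)
  obtain ⟨ε, hε, hball⟩ := Metric.eventually_nhds_iff.1 <|
    hg.eventually (Metric.ball_mem_nhds 0 (mul_pos hα hc))
  refine ⟨ε, hε, fun p q hpq => ?_⟩
  have hsmul : f (p • v + q • w) - μ • (p • v + q • w) = (p * (lam - μ)) • v := by
    rw [map_add, map_smul, map_smul, hv.apply_eq_smul, hw.apply_eq_smul]
    module
  have hlt := hball (by rwa [dist_zero_right])
  rw [dist_zero_right, hsmul, norm_smul, Real.norm_eq_abs, abs_mul, mul_assoc] at hlt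
  exact lt_of_mul_lt_mul_right hlt hc.le

theorem not_forall_mul_pow_lt_pow {a b c : ℝ} (hc : 0 < c) (ha : 0 ≤ a) (hab : a < b) :
    ¬ ∀ k : ℕ, c * b ^ k < a ^ k := by
  intro h
  have hb : 0 < b := ha.trans_lt hab
  obtain ⟨k, hk⟩ := ((tendsto_pow_atTop_nhds_zero_of_lt_one (div_nonneg ha hb.le)
    ((div_lt_one hb).2 hab)).eventually (gt_mem_nhds hc)).exists
  have := h k
  rw [div_pow, div_lt_iff₀ (pow_pos hb k)] at hk
  linarith

theorem not_isLyapunovStable_smul_of_abs_lt {f : Module.End ℝ E} (hf : Continuous f)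
    {M : E → E} (hM : ∀ y, ∃ a : ℝ, M y = a • f y) {v w : E} {lam μ : ℝ}
    (hv : f.HasEigenvector lam v) (hw : f.HasEigenvector μ w) (hlt : |lam| < |μ|)
    {s : ℝ} (hs : s ≠ 0) : ¬ IsLyapunovStable M (s • v) := by
  intro hstab
  have hne : lam ≠ μ := fun h => hlt.ne (by rw [h])
  have hs' : 0 < |s| := abs_pos.2 hs
  obtain ⟨ε₁, hε₁, hp⟩ :=
    exists_abs_lt_of_norm_smul_add_smul_lt hf hv hw hne (half_pos hs')
  obtain ⟨ε₂, hε₂, hq⟩ :=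
    exists_abs_lt_of_norm_smul_add_smul_lt hf hw hv hne.symm one_pos
  obtain ⟨δ, hδ, horbit⟩ := hstab (min ε₁ ε₂) (lt_min hε₁ hε₂)
  obtain ⟨t, ht₀, htδ⟩ := exists_pos_mul_lt hδ ‖w‖
  have hstart : ‖(s • v + t • w) - s • v‖ < δ := by
    rwa [add_sub_cancel_left, norm_smul, Real.norm_of_nonneg ht₀.le, mul_comm]
  refine not_forall_mul_pow_lt_pow (half_pos ht₀) (abs_nonneg lam) hlt fun k => ?_
  obtain ⟨a, ha⟩ := exists_iterate_eq_smul_pow_apply hM k (s • v + t • w)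
  set p := a * s * lam ^ k
  set q := a * t * μ ^ k
  have hcoeff : M^[k] (s • v + t • w) - s • v = (p - s) • v + q • w := by
    rw [ha, map_add, map_smul, map_smul, hv.pow_apply, hw.pow_apply]
    module
  have hnear := horbit _ hstart k
  rw [hcoeff] at hnear
  have hps : |p - s| < |s| / 2 := hp _ _ (hnear.trans_le (min_le_left _ _))
  have hq1 : |q| < 1 := hq q (p - s) (by rw [add_comm]; exact hnear.trans_le (min_le_right _ _))
  have hp' : |s| / 2 < |p| := by linarith [abs_sub_abs_le_abs_sub s p, abs_sub_comm s p]
  have hpq : |p| * (t * |μ| ^ k) = |q| * (|s| * |lam| ^ k) := by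
    simp only [p, q, abs_mul, abs_pow, abs_of_pos ht₀]
    ring
  have hslam : 0 ≤ |s| * |lam| ^ k := by positivity
  have htμ : 0 < t * |μ| ^ k := mul_pos ht₀ (pow_pos ((abs_nonneg lam).trans_lt hlt) k)
  refine lt_of_mul_lt_mul_left ?_ hs'.le
  calc |s| * (t / 2 * |μ| ^ k) = |s| / 2 * (t * |μ| ^ k) := by ring
    _ < |p| * (t * |μ| ^ k) := by gcongr
    _ = |q| * (|s| * |lam| ^ k) := hpq
    _ ≤ |s| * |lam| ^ k := mul_le_of_le_one_left hslam hq1.le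

end

theorem dominated_fixed_point_unstable_general
    (A : Matrix (Fin 3) (Fin 3) ℝ) (φ : Fin 3 → ℝ)
    (M : (Fin 3 → ℝ) → (Fin 3 → ℝ))
    (hM : ∀ y, M y = (1 + φ ⬝ᵥ y)⁻¹ • A.mulVec y)
    (v : Fin 3 → ℝ) (hv : v ≠ 0) (lam : ℝ) (hlam : 1 < lam)
    (heig : A.mulVec v = lam • v) (hφv : φ ⬝ᵥ v ≠ 0)
    (ystar : Fin 3 → ℝ) (hstar : ystar = ((lam - 1) / (φ ⬝ᵥ v)) • v)
    (μ : ℝ) (hμ : ∃ w : Fin 3 → ℝ, w ≠ 0 ∧ A.mulVec w = μ • w)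
    (hdom : lam < |μ|) :
    ¬ (∀ ε > 0, ∃ δ > 0, ∀ y : Fin 3 → ℝ,
        ‖y - ystar‖ < δ → ∀ k : ℕ, ‖M^[k] y - ystar‖ < ε) := by
  obtain ⟨w, hw, hAw⟩ := hμ
  have hM' : ∀ y, ∃ a : ℝ, M y = a • toLin' A y := fun y => ⟨_, by rw [hM, toLin'_apply]⟩
  have hv' : HasEigenvector (toLin' A) lam v :=
    hasEigenvector_iff.2 ⟨mem_eigenspace_iff.2 (by rwa [toLin'_apply]), hv⟩
  have hw' : HasEigenvector (toLin' A) μ w :=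
    hasEigenvector_iff.2 ⟨mem_eigenspace_iff.2 (by rwa [toLin'_apply]), hw⟩
  have hlt : |lam| < |μ| := by rwa [abs_of_pos (zero_lt_one.trans hlam)]
  have hs : (lam - 1) / (φ ⬝ᵥ v) ≠ 0 := div_ne_zero (sub_ne_zero.2 hlam.ne') hφv
  subst hstar
  exact not_isLyapunovStable_smul_of_abs_lt (LinearMap.continuous_of_finiteDimensional _)
    hM' hv' hw' hlt hs

/-- Suppose `v` is an eigenvector of a diagonalizable `3×3` real matrix `A`
with eigenvalue `λ > 1`, `⟨φ, v⟩ ≠ 0`, and `y* = (λ-1)v/⟨φ, v⟩` is the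
corresponding fixed point of `M y = A y/(1 + ⟨φ, y⟩)`. If `A` has another
eigenvalue `μ` with `|μ| > λ`, then `y*` is not Lyapunov stable for the
discrete dynamical system obtained by iterating `M`. -/
theorem dominated_fixed_point_unstable
    (A : Matrix (Fin 3) (Fin 3) ℝ) (φ : Fin 3 → ℝ)
    (M : (Fin 3 → ℝ) → (Fin 3 → ℝ))
    (hM : ∀ y, M y = (1 + φ ⬝ᵥ y)⁻¹ • A.mulVec y)
    (hdiag : ∃ b : Module.Basis (Fin 3) ℝ (Fin 3 → ℝ),
      ∀ i, ∃ μ : ℝ, A.mulVec (b i) = μ • b i)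
    (v : Fin 3 → ℝ) (hv : v ≠ 0) (lam : ℝ) (hlam : 1 < lam)
    (heig : A.mulVec v = lam • v) (hφv : φ ⬝ᵥ v ≠ 0)
    (ystar : Fin 3 → ℝ) (hstar : ystar = ((lam - 1) / (φ ⬝ᵥ v)) • v)
    (μ : ℝ) (hμ : ∃ w : Fin 3 → ℝ, w ≠ 0 ∧ A.mulVec w = μ • w)
    (hdom : lam < |μ|) :
    ¬ (∀ ε > 0, ∃ δ > 0, ∀ y : Fin 3 → ℝ,
        ‖y - ystar‖ < δ → ∀ k : ℕ, ‖M^[k] y - ystar‖ < ε) :=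
  dominated_fixed_point_unstable_general A φ M hM v hv lam hlam heig hφv ystar hstar μ hμ hdom
end

section
/- The map M₁ y = A₁ y/(1 + ⟨φ₁, y⟩) with A₁ = [[1,-2,-2],[-2,-3,-6],[0,-2,-3]] and φ₁ = (4,-4,0) has a fixed point y* with y*₁ > 0, y*₂ < 0, y*₃ > 0 (i.e., in the open octant (+,-,+)). -/
open Matrix

/-! A fixed point of `y ↦ (1 + ⟨φ, y⟩)⁻¹ • A y` is exactly an eigenvector `y` of `A` whose
eigenvalue is `μ = 1 + ⟨φ, y⟩`; so any eigenvector `v` with `⟨φ, v⟩ ≠ 0` and eigenvalue `μ ≠ 0`,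
rescaled to `((μ - 1) / ⟨φ, v⟩) • v`, is a fixed point. For `A₁` the characteristic polynomial is
`t³ + 5t² - 13t - 1`, which has a root `λ ∈ (1, 2)`, and the eigenvector
`(2(1 + λ), -(3 + λ)(λ - 1), 2(λ - 1))` lies in the octant `(+,-,+)` with
`⟨φ₁, v⟩ = 4λ² + 16λ - 4 > 0`, so the rescaling factor `(λ - 1) / ⟨φ₁, v⟩` is positive. -/

section ProjectiveFixedPoint

variable {K n : Type*} [Field K] [Fintype n]

theorem one_add_dotProduct_div_smul (φ v : n → K) (μ : K) (hφv : φ ⬝ᵥ v ≠ 0) :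
    1 + φ ⬝ᵥ (((μ - 1) / (φ ⬝ᵥ v)) • v) = μ := by
  rw [dotProduct_smul, smul_eq_mul, div_mul_cancel₀ _ hφv]
  ring

theorem inv_smul_mulVec_smul_of_mulVec_eq_smul {A : Matrix n n K} {v : n → K} {μ : K}
    (hv : A *ᵥ v = μ • v) (hμ : μ ≠ 0) (c : K) : μ⁻¹ • A *ᵥ (c • v) = c • v := by
  rw [mulVec_smul, hv, smul_comm, inv_smul_smul₀ hμ]

end ProjectiveFixedPoint

theorem exists_root_cubic_mem_Ioo : ∃ l ∈ Set.Ioo (1 : ℝ) 2, l ^ 3 + 5 * l ^ 2 - 13 * l - 1 = 0 := by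
  have hcont : ContinuousOn (fun t : ℝ => t ^ 3 + 5 * t ^ 2 - 13 * t - 1) (Set.Icc 1 2) := by
    fun_prop
  exact intermediate_value_Ioo (by norm_num) hcont (by norm_num)

theorem mulVec_eigenvector_of_cubic_eq_zero {l : ℝ} (hl : l ^ 3 + 5 * l ^ 2 - 13 * l - 1 = 0) :
    !![(1:ℝ), -2, -2; -2, -3, -6; 0, -2, -3] *ᵥ ![2 * (1 + l), -((3 + l) * (l - 1)), 2 * (l - 1)]
      = l • ![2 * (1 + l), -((3 + l) * (l - 1)), 2 * (l - 1)] := by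
  ext i
  fin_cases i <;>
    simp only [mulVec, dotProduct, Fin.sum_univ_three, of_apply, Pi.smul_apply, smul_eq_mul,
      Fin.isValue, Fin.zero_eta, Fin.mk_one, Fin.reduceFinMk, cons_val', cons_val_fin_one,
      cons_val_zero, cons_val_one, cons_val]
  · ring
  · linear_combination hl
  · ring

/-- The map `M₁ y = A₁ y/(1 + ⟨φ₁, y⟩)` with
`A₁ = [[1,-2,-2],[-2,-3,-6],[0,-2,-3]]` and `φ₁ = (4,-4,0)` has a fixed point
in the open octant `(+,-,+)`. -/
theorem M1_fixed_point_octant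
    (M₁ : (Fin 3 → ℝ) → (Fin 3 → ℝ))
    (hM : ∀ y, M₁ y = (1 + ![(4:ℝ), -4, 0] ⬝ᵥ y)⁻¹ •
      (!![(1:ℝ), -2, -2; -2, -3, -6; 0, -2, -3]).mulVec y) :
    ∃ y : Fin 3 → ℝ, 1 + ![(4:ℝ), -4, 0] ⬝ᵥ y ≠ 0 ∧ M₁ y = y ∧
      y 0 > 0 ∧ y 1 < 0 ∧ y 2 > 0 := by
  obtain ⟨l, ⟨hl1, hl2⟩, hroot⟩ := exists_root_cubic_mem_Ioo
  set v : Fin 3 → ℝ := ![2 * (1 + l), -((3 + l) * (l - 1)), 2 * (l - 1)]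
  have hφv : ![(4:ℝ), -4, 0] ⬝ᵥ v = 4 * l ^ 2 + 16 * l - 4 := by
    simp only [v, dotProduct, Fin.sum_univ_three, Fin.isValue, cons_val_zero, cons_val_one, cons_val]
    ring
  have hφv_pos : 0 < ![(4:ℝ), -4, 0] ⬝ᵥ v := by rw [hφv]; nlinarith
  have hc : 0 < (l - 1) / (![(4:ℝ), -4, 0] ⬝ᵥ v) := div_pos (by linarith) hφv_pos
  have hden := one_add_dotProduct_div_smul ![(4:ℝ), -4, 0] v l hφv_pos.ne'
  refine ⟨((l - 1) / (![(4:ℝ), -4, 0] ⬝ᵥ v)) • v, by rw [hden]; positivity, ?_, ?_, ?_, ?_⟩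
  · rw [hM, hden]
    exact inv_smul_mulVec_smul_of_mulVec_eq_smul
      (mulVec_eigenvector_of_cubic_eq_zero hroot) (by positivity) _
  all_goals simp only [v, Pi.smul_apply, smul_eq_mul, cons_val_zero, cons_val_one, cons_val_two,
    head_cons, tail_cons]
  · exact mul_pos hc (by linarith)
  · exact mul_neg_of_pos_of_neg hc (by nlinarith)
  · exact mul_pos hc (by linarith)
end

section
/- The map M₀ y = A₀ y/(1 + ⟨φ₀, y⟩) with A₀ = [[1,0,0],[-2,5,2],[0,2,1]] and φ₀ = (4,-4,0) has no nonzero fixed point in the open octant {y : y₁ > 0, y₂ < 0, y₃ > 0}. -/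
open Matrix

/-- The map `M₀ y = A₀ y/(1 + ⟨φ₀, y⟩)` with `A₀ = [[1,0,0],[-2,5,2],[0,2,1]]`
and `φ₀ = (4,-4,0)` has no fixed point in the open octant
`{y : y₁ > 0, y₂ < 0, y₃ > 0}`. -/
theorem M0_no_fixed_point_octant
    (M₀ : (Fin 3 → ℝ) → (Fin 3 → ℝ))
    (hM : ∀ y, M₀ y = (1 + ![(4:ℝ), -4, 0] ⬝ᵥ y)⁻¹ •
      (!![(1:ℝ), 0, 0; -2, 5, 2; 0, 2, 1]).mulVec y) :
    ¬ ∃ y : Fin 3 → ℝ, y 0 > 0 ∧ y 1 < 0 ∧ y 2 > 0 ∧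
      1 + ![(4:ℝ), -4, 0] ⬝ᵥ y ≠ 0 ∧ M₀ y = y := by
  rintro ⟨y, h0, h1, h2, hc, hfix⟩
  have h := congrFun (hM y ▸ hfix) 0
  simp [Matrix.mulVec, dotProduct, Fin.sum_univ_three] at h hc
  have hcpos : (0:ℝ) < 1 + (4 * y 0 + -(4 * y 1)) := by nlinarith
  rw [inv_mul_eq_div, div_eq_iff hcpos.ne'] at h
  nlinarith
end
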